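/- arXiv:1802.09674 — 4 statements merged into one kernel-verified Lean document; each statement's English description precedes it below -/
import Mathlib

section
/- The mean ρ(λ) of the measure Θ_λ is strictly increasing on [0, λ_c): for all λ_1, λ_2 with 0 ≤ λ_1 < λ_2 < λ_c, one has ρ(λ_1) < ρ(λ_2). -/
/-!
Writing `N(λ) = Σ k a_k λ^k`, the mean is `ρ(λ) = N(λ) / Z(λ)`, so `ρ(λ₁) < ρ(λ₂)` amounts to
`N(λ₁) Z(λ₂) < N(λ₂) Z(λ₁)`. Expanding both products as double series, the difference is
`Σ_{i,j} i a_i a_j (λ₂^i λ₁^j - λ₁^i λ₂^j)`, and symmetrizing in `(i, j)` turns it into half of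
`Σ_{i,j} (i - j) a_i a_j (λ₂^i λ₁^j - λ₁^i λ₂^j)`, whose terms are all nonnegative and whose
`(1, 0)` term is positive. Below `λ_c` the ratio `a_{k+1} λ / a_k = λ h(k) / g(k+1)` is eventually
at most some `r < 1`, which makes all the series involved converge.
-/

/-- The coefficients `a_k = (∏_{j=0}^{k-1} h(j)) / (∏_{j=1}^{k} g(j))`, with `a_0 = 1`. -/
noncomputable def coefA (g h : ℕ → ℝ) (k : ℕ) : ℝ :=
  (∏ j ∈ Finset.range k, h j) / ∏ j ∈ Finset.range k, g (j + 1)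

/-- The partition function `Z(λ) = Σ_{k ≥ 0} a_k λ^k`. -/
noncomputable def partZ (g h : ℕ → ℝ) (lam : ℝ) : ℝ :=
  ∑' k : ℕ, coefA g h k * lam ^ k

/-- The critical value `λ_c = liminf_{k → ∞} g(k+1)/h(k)` (as an extended real). -/
noncomputable def lamCrit (g h : ℕ → ℝ) : EReal :=
  Filter.liminf (fun k : ℕ => ((g (k + 1) / h k : ℝ) : EReal)) Filter.atTop

/-- The probability mass function `Θ_λ({k}) = a_k λ^k / Z(λ)`. -/
noncomputable def thetaPMF (g h : ℕ → ℝ) (lam : ℝ) (k : ℕ) : ℝ :=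
  coefA g h k * lam ^ k / partZ g h lam

open Filter

section Chebyshev

variable {ι : Type*} [LinearOrder ι] {f p q : ι → ℝ}

theorem tsum_mul_mul_tsum_lt_of_monotone_ratio (hf : Monotone f)
    (hpq : ∀ i j, i ≤ j → p j * q i ≤ p i * q j) {i₀ j₀ : ι} (hf₀ : f i₀ < f j₀)
    (hpq₀ : p j₀ * q i₀ < p i₀ * q j₀) (hfp : Summable fun i => f i * p i)
    (hfq : Summable fun i => f i * q i) (hp : Summable p) (hq : Summable q) :
    (∑' i, f i * p i) * ∑' i, q i < (∑' i, f i * q i) * ∑' i, p i := by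
  set D : ι × ι → ℝ := fun x => f x.1 * q x.1 * p x.2 - f x.1 * p x.1 * q x.2
  have hD : Summable D :=
    (summable_mul_of_summable_norm hfq.norm hp.norm).sub
      (summable_mul_of_summable_norm hfp.norm hq.norm)
  have hdiff : (∑' i, f i * q i) * (∑' i, p i) - (∑' i, f i * p i) * (∑' i, q i) = ∑' x, D x := by
    rw [tsum_mul_tsum_of_summable_norm hfq.norm hp.norm,
      tsum_mul_tsum_of_summable_norm hfp.norm hq.norm,
      ← (summable_mul_of_summable_norm hfq.norm hp.norm).tsum_sub
        (summable_mul_of_summable_norm hfp.norm hq.norm)]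
  have hsymm : ∀ i j, D (i, j) + D (j, i) = (f i - f j) * (q i * p j - p i * q j) := by
    intro i j
    simp only [D]
    ring
  have hnonneg : ∀ x : ι × ι, 0 ≤ D x + D x.swap := by
    rintro ⟨i, j⟩
    rw [Prod.swap_prod_mk, hsymm]
    rcases le_total i j with hij | hji
    · exact mul_nonneg_of_nonpos_of_nonpos (sub_nonpos.mpr (hf hij))
        (by linarith [hpq i j hij])
    · exact mul_nonneg (sub_nonneg.mpr (hf hji)) (by linarith [hpq j i hji])
  have hpos : 0 < D (j₀, i₀) + D (j₀, i₀).swap := by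
    rw [Prod.swap_prod_mk, hsymm]
    exact mul_pos (sub_pos.mpr hf₀) (by linarith)
  have hDswap : Summable (fun x : ι × ι => D x.swap) := (Equiv.prodComm ι ι).summable_iff.mpr hD
  have htwice : 0 < ∑' x, D x + ∑' x : ι × ι, D x.swap := by
    rw [← hD.tsum_add hDswap]
    exact (hD.add hDswap).tsum_pos hnonneg _ hpos
  rw [show ∑' x : ι × ι, D x.swap = ∑' x, D x from (Equiv.prodComm ι ι).tsum_eq D] at htwice
  linarith

end Chebyshev

theorem summable_succ_mul_of_ratio_le {x : ℕ → ℝ} {r : ℝ} (hx : 0 ≤ x) (hr : r < 1)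
    (hratio : ∀ᶠ k in atTop, x (k + 1) ≤ r * x k) :
    Summable fun k : ℕ => ((k : ℝ) + 1) * x k := by
  obtain ⟨s, hrs, hs1⟩ := exists_between hr
  have hsmall : ∀ᶠ k : ℕ in atTop, r * (1 / ((k : ℝ) + 1)) < s - r := by
    have := (tendsto_one_div_add_atTop_nhds_zero_nat (𝕜 := ℝ)).const_mul r
    rw [mul_zero] at this
    exact this.eventually_lt_const (sub_pos.mpr hrs)
  refine summable_of_ratio_norm_eventually_le hs1 ?_
  filter_upwards [hratio, hsmall] with k hk hks
  have hk1 : (0 : ℝ) < (k : ℝ) + 1 := by positivity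
  have hweight : ((k : ℝ) + 1 + 1) * r ≤ s * ((k : ℝ) + 1) := by
    rw [mul_one_div, div_lt_iff₀ hk1] at hks
    linarith
  rw [Real.norm_of_nonneg (mul_nonneg (by positivity) (hx _)),
    Real.norm_of_nonneg (mul_nonneg hk1.le (hx _))]
  push_cast
  calc ((k : ℝ) + 1 + 1) * x (k + 1) ≤ ((k : ℝ) + 1 + 1) * (r * x k) := by gcongr
    _ = (((k : ℝ) + 1 + 1) * r) * x k := by ring
    _ ≤ (s * ((k : ℝ) + 1)) * x k := mul_le_mul_of_nonneg_right hweight (hx k)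
    _ = s * (((k : ℝ) + 1) * x k) := by ring

theorem pow_mul_pow_le_pow_mul_pow {a b : ℝ} (ha : 0 ≤ a) (hab : a ≤ b) {i j : ℕ} (hij : i ≤ j) :
    a ^ j * b ^ i ≤ a ^ i * b ^ j := by
  obtain ⟨m, rfl⟩ := Nat.exists_eq_add_of_le hij
  have hb : 0 ≤ b := ha.trans hab
  calc a ^ (i + m) * b ^ i = a ^ i * b ^ i * a ^ m := by ring
    _ ≤ a ^ i * b ^ i * b ^ m := by gcongr
    _ = a ^ i * b ^ (i + m) := by ring

theorem EReal.exists_lt_eventually_lt_of_lt_liminf {α : Type*} {l : Filter α} {u : α → ℝ} {a : ℝ}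
    (h : (a : EReal) < liminf (fun x => (u x : EReal)) l) :
    ∃ c : ℝ, a < c ∧ ∀ᶠ x in l, c < u x := by
  obtain ⟨c, hac, hc⟩ := EReal.exists_between_coe_real h
  exact ⟨c, EReal.coe_lt_coe_iff.mp hac,
    (eventually_lt_of_lt_liminf hc).mono fun _ => EReal.coe_lt_coe_iff.mp⟩

section PartitionFunction

variable {g h : ℕ → ℝ}

theorem coefA_zero : coefA g h 0 = 1 := by simp [coefA]

theorem coefA_succ (k : ℕ) : coefA g h (k + 1) = coefA g h k * (h k / g (k + 1)) := by
  rw [coefA, coefA, Finset.prod_range_succ, Finset.prod_range_succ, div_mul_div_comm]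

theorem coefA_pos (hg : ∀ k : ℕ, 1 ≤ k → 0 < g k) (hh : ∀ k : ℕ, 0 < h k) (k : ℕ) :
    0 < coefA g h k :=
  div_pos (Finset.prod_pos fun j _ => hh j) (Finset.prod_pos fun j _ => hg (j + 1) (by omega))

theorem coefA_mul_pow_nonneg (hg : ∀ k : ℕ, 1 ≤ k → 0 < g k) (hh : ∀ k : ℕ, 0 < h k) {lam : ℝ}
    (hlam : 0 ≤ lam) (k : ℕ) : 0 ≤ coefA g h k * lam ^ k :=
  mul_nonneg (coefA_pos hg hh k).le (pow_nonneg hlam k)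

theorem summable_succ_mul_coefA_mul_pow (hg : ∀ k : ℕ, 1 ≤ k → 0 < g k)
    (hh : ∀ k : ℕ, 0 < h k) {lam : ℝ} (hlam : 0 ≤ lam)
    (hcrit : (lam : EReal) < lamCrit g h) :
    Summable fun k : ℕ => ((k : ℝ) + 1) * (coefA g h k * lam ^ k) := by
  obtain ⟨c, hlc, hc⟩ := EReal.exists_lt_eventually_lt_of_lt_liminf hcrit
  have hc0 : 0 < c := hlam.trans_lt hlc
  refine summable_succ_mul_of_ratio_le
    (coefA_mul_pow_nonneg hg hh hlam) ((div_lt_one hc0).mpr hlc) ?_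
  filter_upwards [hc] with k hk
  have hratio : h k / g (k + 1) ≤ 1 / c := by
    rw [div_le_div_iff₀ (hg (k + 1) (by omega)) hc0, one_mul, mul_comm]
    exact ((lt_div_iff₀ (hh k)).mp hk).le
  calc coefA g h (k + 1) * lam ^ (k + 1)
      = (h k / g (k + 1)) * lam * (coefA g h k * lam ^ k) := by rw [coefA_succ, pow_succ]; ring
    _ ≤ 1 / c * lam * (coefA g h k * lam ^ k) := by
        gcongr
        exact coefA_mul_pow_nonneg hg hh hlam k
    _ = lam / c * (coefA g h k * lam ^ k) := by ring

theorem summable_coefA_mul_pow (hg : ∀ k : ℕ, 1 ≤ k → 0 < g k) (hh : ∀ k : ℕ, 0 < h k)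
    {lam : ℝ} (hlam : 0 ≤ lam) (hcrit : (lam : EReal) < lamCrit g h) :
    Summable fun k : ℕ => coefA g h k * lam ^ k :=
  (summable_succ_mul_coefA_mul_pow hg hh hlam hcrit).of_nonneg_of_le
    (coefA_mul_pow_nonneg hg hh hlam)
    (fun k => le_mul_of_one_le_left (coefA_mul_pow_nonneg hg hh hlam k)
      (by simp))

theorem summable_natCast_mul_coefA_mul_pow (hg : ∀ k : ℕ, 1 ≤ k → 0 < g k)
    (hh : ∀ k : ℕ, 0 < h k) {lam : ℝ} (hlam : 0 ≤ lam) (hcrit : (lam : EReal) < lamCrit g h) :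
    Summable fun k : ℕ => (k : ℝ) * (coefA g h k * lam ^ k) :=
  (summable_succ_mul_coefA_mul_pow hg hh hlam hcrit).of_nonneg_of_le
    (fun k => mul_nonneg k.cast_nonneg (coefA_mul_pow_nonneg hg hh hlam k))
    (fun k => mul_le_mul_of_nonneg_right (by linarith)
      (coefA_mul_pow_nonneg hg hh hlam k))

theorem partZ_pos (hg : ∀ k : ℕ, 1 ≤ k → 0 < g k) (hh : ∀ k : ℕ, 0 < h k) {lam : ℝ}
    (hlam : 0 ≤ lam) (hsum : Summable fun k => coefA g h k * lam ^ k) : 0 < partZ g h lam :=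
  hsum.tsum_pos (coefA_mul_pow_nonneg hg hh hlam) 0
    (by simp [coefA_zero])

theorem tsum_natCast_mul_thetaPMF (lam : ℝ) :
    ∑' k : ℕ, (k : ℝ) * thetaPMF g h lam k
      = (∑' k : ℕ, (k : ℝ) * (coefA g h k * lam ^ k)) / partZ g h lam := by
  rw [← tsum_div_const]
  simp only [thetaPMF, mul_div_assoc]

end PartitionFunction

theorem mean_strictMono_general
    (g h : ℕ → ℝ) (hg : ∀ k : ℕ, 1 ≤ k → 0 < g k) (hh : ∀ k : ℕ, 0 < h k)
    (lam₁ lam₂ : ℝ) (h₁ : 0 ≤ lam₁) (h₁₂ : lam₁ < lam₂)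
    (h₂c : (lam₂ : EReal) < lamCrit g h) :
    (∑' k : ℕ, (k : ℝ) * thetaPMF g h lam₁ k)
      < ∑' k : ℕ, (k : ℝ) * thetaPMF g h lam₂ k := by
  have h₂ : 0 ≤ lam₂ := h₁.trans h₁₂.le
  have h₁c : (lam₁ : EReal) < lamCrit g h := (EReal.coe_lt_coe_iff.mpr h₁₂).trans h₂c
  have hZ₁ := summable_coefA_mul_pow hg hh h₁ h₁c
  have hZ₂ := summable_coefA_mul_pow hg hh h₂ h₂c
  rw [tsum_natCast_mul_thetaPMF, tsum_natCast_mul_thetaPMF,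
    div_lt_div_iff₀ (partZ_pos hg hh h₁ hZ₁) (partZ_pos hg hh h₂ hZ₂)]
  refine tsum_mul_mul_tsum_lt_of_monotone_ratio Nat.mono_cast (fun i j hij => ?_)
    (i₀ := 0) (j₀ := 1) (by simp) ?_ (summable_natCast_mul_coefA_mul_pow hg hh h₁ h₁c)
    (summable_natCast_mul_coefA_mul_pow hg hh h₂ h₂c) hZ₁ hZ₂
  · have hcoef := mul_nonneg (coefA_pos hg hh i).le (coefA_pos hg hh j).le
    linear_combination mul_le_mul_of_nonneg_left (pow_mul_pow_le_pow_mul_pow h₁ h₁₂.le hij) hcoef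
  · simpa [coefA_zero] using mul_lt_mul_of_pos_left h₁₂ (coefA_pos hg hh 1)

/-- The mean `ρ(λ) = Σ_k k Θ_λ({k})` of the measure `Θ_λ` is
strictly increasing on `[0, λ_c)`. -/
theorem mean_strictMono
    (g h : ℕ → ℝ) (hg0 : g 0 = 0) (hg : ∀ k : ℕ, 1 ≤ k → 0 < g k) (hh : ∀ k : ℕ, 0 < h k)
    (lam₁ lam₂ : ℝ) (h₁ : 0 ≤ lam₁) (h₁₂ : lam₁ < lam₂)
    (h₂c : (lam₂ : EReal) < lamCrit g h) :
    (∑' k : ℕ, (k : ℝ) * thetaPMF g h lam₁ k)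
      < ∑' k : ℕ, (k : ℝ) * thetaPMF g h lam₂ k :=
  mean_strictMono_general g h hg hh lam₁ lam₂ h₁ h₁₂ h₂c
end

section
/- Fix 0 ≤ λ < λ_c and write Θ = Θ_λ. For every function F : ℕ × ℕ → [0, ∞] the following identity of sums in [0, ∞] holds: Σ_{m ≥ 1, k ≥ 0} g(m) h(k) Θ({m}) Θ({k}) F(m−1, k+1) = Σ_{m ≥ 0, k ≥ 0} g(k) h(m) Θ({m}) Θ({k}) F(m, k). (Probabilistically: if X, Y are independent with law Θ, then E[g(X) h(Y) F(X−1, Y+1)] = E[g(Y) h(X) F(X, Y)]; this is the identity E_ν[f(η^{x,y}) g(η(x)) h(η(y))] = E_ν[f(η) g(η(y)) h(η(x))] used for the product measure ν.) -/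
/-!
Since `a_{m+1} / a_m = h(m) / g(m+1)`, the weights satisfy detailed balance
`g(m+1) Θ(m+1) = λ h(m) Θ(m)`. Hence the summand of the left side at `(m+1, k)` has the same
weight as the summand of the right side at `(m, k+1)`, and the identity is the reindexing
`m ↦ m+1` on the left, `k ↦ k+1` on the right; the terms with `k = 0` on the right vanish
because `g(0) = 0`.
-/

open scoped BigOperators

section Reindex

variable {M : Type*} [AddCommMonoid M] [TopologicalSpace M] {f : ℕ × ℕ → M}

theorem tsum_prod_eq_tsum_succ_fst (hf : ∀ k, f (0, k) = 0) :
    ∑' p, f p = ∑' q : ℕ × ℕ, f (q.1 + 1, q.2) := by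
  refine ((Function.Injective.tsum_eq (g := fun q : ℕ × ℕ => (q.1 + 1, q.2))
    (fun a b hab => by simpa [Prod.ext_iff] using hab) ?_)).symm
  rintro ⟨_ | m, k⟩ hp
  · exact absurd (hf k) hp
  · exact ⟨(m, k), rfl⟩

theorem tsum_prod_eq_tsum_succ_snd (hf : ∀ m, f (m, 0) = 0) :
    ∑' p, f p = ∑' q : ℕ × ℕ, f (q.1, q.2 + 1) := by
  refine ((Function.Injective.tsum_eq (g := fun q : ℕ × ℕ => (q.1, q.2 + 1))
    (fun a b hab => by simpa [Prod.ext_iff] using hab) ?_)).symm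
  rintro ⟨m, _ | k⟩ hp
  · exact absurd (hf m) hp
  · exact ⟨(m, k), rfl⟩

end Reindex

section DetailedBalance

variable {g : ℕ → ℝ} (h : ℕ → ℝ) (hg : ∀ k, 1 ≤ k → g k ≠ 0)
include hg

theorem mul_coefA_succ (m : ℕ) : g (m + 1) * coefA g h (m + 1) = h m * coefA g h m := by
  have hgm : g (m + 1) ≠ 0 := hg (m + 1) (Nat.le_add_left 1 m)
  have hprod : ∏ j ∈ Finset.range m, g (j + 1) ≠ 0 :=
    Finset.prod_ne_zero_iff.2 fun j _ => hg (j + 1) (Nat.le_add_left 1 j)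
  rw [coefA, coefA, Finset.prod_range_succ, Finset.prod_range_succ]
  field_simp

theorem mul_thetaPMF_succ (lam : ℝ) (m : ℕ) :
    g (m + 1) * thetaPMF g h lam (m + 1) = lam * (h m * thetaPMF g h lam m) := by
  simp only [thetaPMF, mul_div_assoc', ← mul_assoc, mul_coefA_succ h hg m, pow_succ]
  ring

theorem mul_thetaPMF_exchange (lam : ℝ) (m k : ℕ) :
    g (m + 1) * h k * thetaPMF g h lam (m + 1) * thetaPMF g h lam k
      = g (k + 1) * h m * thetaPMF g h lam m * thetaPMF g h lam (k + 1) := by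
  linear_combination (h k * thetaPMF g h lam k) * mul_thetaPMF_succ h hg lam m
    - (h m * thetaPMF g h lam m) * mul_thetaPMF_succ h hg lam k

end DetailedBalance

theorem exchange_identity_general
    (g h : ℕ → ℝ) (hg0 : g 0 = 0) (hg : ∀ k : ℕ, 1 ≤ k → 0 < g k)
    (lam : ℝ)
    (F : ℕ × ℕ → ENNReal) :
    (∑' p : ℕ × ℕ,
        if 1 ≤ p.1 then
          ENNReal.ofReal
              (g p.1 * h p.2 * thetaPMF g h lam p.1 * thetaPMF g h lam p.2)
            * F (p.1 - 1, p.2 + 1)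
        else 0)
    = ∑' p : ℕ × ℕ,
        ENNReal.ofReal
            (g p.2 * h p.1 * thetaPMF g h lam p.1 * thetaPMF g h lam p.2)
          * F p := by
  rw [tsum_prod_eq_tsum_succ_fst (fun k => by simp)]
  conv_rhs => rw [tsum_prod_eq_tsum_succ_snd (fun m => by simp [hg0])]
  refine tsum_congr fun ⟨m, k⟩ => ?_
  simp only [Nat.le_add_left, if_true, Nat.add_sub_cancel,
    mul_thetaPMF_exchange h (fun k hk => (hg k hk).ne') lam m k]

/-- For `Θ = Θ_λ` with `0 ≤ λ < λ_c` and any `F : ℕ × ℕ → [0, ∞]`,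
`Σ_{m ≥ 1, k ≥ 0} g(m) h(k) Θ({m}) Θ({k}) F(m−1, k+1)
  = Σ_{m ≥ 0, k ≥ 0} g(k) h(m) Θ({m}) Θ({k}) F(m, k)`
as an identity of sums in `[0, ∞]`. -/
theorem exchange_identity
    (g h : ℕ → ℝ) (hg0 : g 0 = 0) (hg : ∀ k : ℕ, 1 ≤ k → 0 < g k) (hh : ∀ k : ℕ, 0 < h k)
    (lam : ℝ) (hlam0 : 0 ≤ lam) (hlamc : (lam : EReal) < lamCrit g h)
    (F : ℕ × ℕ → ENNReal) :
    (∑' p : ℕ × ℕ,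
        if 1 ≤ p.1 then
          ENNReal.ofReal
              (g p.1 * h p.2 * thetaPMF g h lam p.1 * thetaPMF g h lam p.2)
            * F (p.1 - 1, p.2 + 1)
        else 0)
    = ∑' p : ℕ × ℕ,
        ENNReal.ofReal
            (g p.2 * h p.1 * thetaPMF g h lam p.1 * thetaPMF g h lam p.2)
          * F p :=
  exchange_identity_general g h hg0 hg lam F
end

section
/- Entropy particle bound (Lemma 4.1 in measure form): let n ≥ 1, γ > 0, and let θ be a probability measure on ℕ with M_γ := Σ_{k≥0} e^{γk} θ({k}) < ∞. Let ν = ⊗_{x ∈ ℤ^n} θ be the product probability measure on ℕ^{ℤ^n}. Let N ≥ 1, C > 0, C_1 > 0, let A ⊆ ℤ^n be a finite set with |A| ≤ C_1 N^n, and let μ be a probability measure on ℕ^{ℤ^n} with relative entropy H(μ | ν) ≤ C N^n. Then (1/N^n) ∫ Σ_{x ∈ A} η(x) dμ(η) ≤ (C_1 log M_γ + C)/γ. -/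
/-!
Young's inequality `s t ≤ s log s - s + e^t`, applied pointwise with `s = dμ/dν` and integrated
against `ν`, gives the entropy inequality `∫ g dμ ≤ H(μ | ν) + log ∫ e^g dν`. Take
`g = γ Σ_{x ∈ A} η(x)`: the sites are independent under `ν`, so `∫ e^g dν = M_γ^{|A|}`, whence
`γ ∫ Σ_{x ∈ A} η(x) dμ ≤ C N^n + |A| log M_γ ≤ (C + C₁ log M_γ) N^n`, using `M_γ ≥ 1`.
-/

open MeasureTheory Real ProbabilityTheory
open scoped ENNReal

theorem mul_le_mul_log_sub_add_exp {s : ℝ} (hs : 0 ≤ s) (t : ℝ) :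
    s * t ≤ s * log s - s + exp t := by
  rcases hs.eq_or_lt with rfl | hs
  · simpa using (exp_pos t).le
  · have h := mul_le_mul_of_nonneg_left (add_one_le_exp (t - log s)) hs.le
    rw [exp_sub, exp_log hs, mul_div_cancel₀ _ hs.ne'] at h
    linarith

theorem MeasureTheory.Measure.AbsolutelyContinuous.neZero {α : Type*} [MeasurableSpace α]
    {μ ν : Measure α} [NeZero μ] (hμν : μ ≪ ν) : NeZero ν :=
  ⟨fun hν ↦ NeZero.ne μ (Measure.measure_univ_eq_zero.mp (hμν (by simp [hν])))⟩

section Entropy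

variable {α : Type*} [MeasurableSpace α] {μ ν : Measure α}

/-- This is `H(μ | ν)` only when `μ ≪ ν` and the integrand is `ν`-integrable; otherwise it is a
junk value. -/
noncomputable def relEntropy (μ ν : Measure α) : ℝ :=
  ∫ x, (μ.rnDeriv ν x).toReal * log (μ.rnDeriv ν x).toReal ∂ν

theorem integral_le_relEntropy_add_log_integral_exp
    [IsProbabilityMeasure μ] [SigmaFinite ν] (hμν : μ ≪ ν)
    (hent : Integrable (fun x ↦ (μ.rnDeriv ν x).toReal * log (μ.rnDeriv ν x).toReal) ν)
    {f : α → ℝ} (hf : Integrable f μ) (hexp : Integrable (fun x ↦ exp (f x)) ν) :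
    ∫ x, f x ∂μ ≤ relEntropy μ ν + log (∫ x, exp (f x) ∂ν) := by
  have := hμν.neZero
  set ρ : α → ℝ := fun x ↦ (μ.rnDeriv ν x).toReal
  set Z := ∫ x, exp (f x) ∂ν
  have hZ : 0 < Z := integral_exp_pos hexp
  have hρ : Integrable ρ ν := Measure.integrable_toReal_rnDeriv
  have hpoint : ∀ x, ρ x * (f x - log Z) ≤ ρ x * log (ρ x) - ρ x + exp (f x) / Z := by
    intro x
    simpa [exp_sub, exp_log hZ] using
      mul_le_mul_log_sub_add_exp ENNReal.toReal_nonneg (f x - log Z)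
  have hlhs : Integrable (fun x ↦ ρ x * (f x - log Z)) ν :=
    (integrable_toReal_rnDeriv_mul_iff hμν).mpr (hf.sub (integrable_const _))
  have hentρ : Integrable (fun x ↦ ρ x * log (ρ x)) ν := hent
  have hentρ' : Integrable (fun x ↦ ρ x * log (ρ x) - ρ x) ν := hentρ.sub hρ
  have hrhs : Integrable (fun x ↦ ρ x * log (ρ x) - ρ x + exp (f x) / Z) ν :=
    hentρ'.add (hexp.div_const Z)
  have key : ∫ x, f x ∂μ - log Z ≤ ∫ x, ρ x * log (ρ x) ∂ν :=
    calc ∫ x, f x ∂μ - log Z = ∫ x, ρ x * (f x - log Z) ∂ν := by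
          rw [integral_toReal_rnDeriv_mul hμν, integral_sub hf (integrable_const _)]
          simp
      _ ≤ ∫ x, (ρ x * log (ρ x) - ρ x + exp (f x) / Z) ∂ν := integral_mono hlhs hrhs hpoint
      _ = ∫ x, ρ x * log (ρ x) ∂ν := by
          rw [integral_add hentρ' (hexp.div_const Z), integral_sub hentρ hρ, integral_div,
            Measure.integral_toReal_rnDeriv hμν, div_self hZ.ne']
          simp
  exact sub_le_iff_le_add.mp key

theorem lintegral_ofReal_le_relEntropy_add_log_integral_exp
    [IsProbabilityMeasure μ] [SigmaFinite ν] (hμν : μ ≪ ν)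
    (hent : Integrable (fun x ↦ (μ.rnDeriv ν x).toReal * log (μ.rnDeriv ν x).toReal) ν)
    {g : α → ℝ} (hg : Measurable g) (hg0 : 0 ≤ g) (hexp : Integrable (fun x ↦ exp (g x)) ν) :
    ∫⁻ x, ENNReal.ofReal (g x) ∂μ ≤ ENNReal.ofReal (relEntropy μ ν + log (∫ x, exp (g x) ∂ν)) := by
  have := hμν.neZero
  have htrunc : ∀ m : ℕ, ∫⁻ x, ENNReal.ofReal (min (g x) m) ∂μ ≤
      ENNReal.ofReal (relEntropy μ ν + log (∫ x, exp (g x) ∂ν)) := by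
    intro m
    have hm : Measurable fun x ↦ min (g x) m := hg.min measurable_const
    have hexp_m : Integrable (fun x ↦ exp (min (g x) m)) ν :=
      hexp.mono hm.exp.aestronglyMeasurable (ae_of_all _ fun x ↦ by
        simp [abs_of_pos (exp_pos _)])
    have hint_m : Integrable (fun x ↦ min (g x) m) μ :=
      Integrable.of_bound hm.aestronglyMeasurable m (ae_of_all _ fun x ↦ by
        simp [abs_of_nonneg (le_min (hg0 x) m.cast_nonneg)])
    rw [← ofReal_integral_eq_lintegral_ofReal hint_m
      (ae_of_all _ fun x ↦ le_min (hg0 x) m.cast_nonneg)]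
    refine ENNReal.ofReal_le_ofReal ?_
    calc ∫ x, min (g x) m ∂μ
        ≤ _ + log (∫ x, exp (min (g x) m) ∂ν) :=
          integral_le_relEntropy_add_log_integral_exp hμν hent hint_m hexp_m
      _ ≤ _ := add_le_add_right (log_le_log (integral_exp_pos hexp_m)
          (integral_mono hexp_m hexp fun x ↦ exp_le_exp.mpr (min_le_left _ _))) _
  have hsup : ∀ x, ENNReal.ofReal (g x) = ⨆ m : ℕ, ENNReal.ofReal (min (g x) m) := by
    intro x
    simp only [ENNReal.ofReal_min, ENNReal.ofReal_natCast]
    rw [← inf_iSup_eq, ENNReal.iSup_natCast, inf_top_eq]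
  simp_rw [hsup]
  rw [lintegral_iSup (fun m ↦ (hg.min measurable_const).ennreal_ofReal)
    fun m m' hmm' x ↦ ENNReal.ofReal_le_ofReal (min_le_min le_rfl (Nat.cast_le.mpr hmm'))]
  exact iSup_le htrunc

end Entropy

section Product

variable {ι β : Type*} [MeasurableSpace β] [Countable β] [MeasurableSingletonClass β] [Nonempty β]
  {θ : Measure β} {ν : Measure (ι → β)}

theorem map_finset_restrict_eq_pi [SigmaFinite θ]
    (hν : ∀ (S : Finset ι) (vals : ι → β), ν {η | ∀ x ∈ S, η x = vals x} = ∏ x ∈ S, θ {vals x})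
    (A : Finset ι) :
    ν.map A.restrict = Measure.pi fun _ ↦ θ := by
  refine Measure.ext_iff_singleton.mpr fun v ↦ ?_
  set vals : ι → β := Function.extend Subtype.val v fun _ ↦ Classical.arbitrary β
  have hvals : ∀ x : A, vals x = v x := fun x ↦ Subtype.val_injective.extend_apply _ _ x
  have hpre : (A.restrict : (ι → β) → A → β) ⁻¹' {v} = {η | ∀ x ∈ A, η x = vals x} := by
    ext η
    simp only [Set.mem_preimage, Set.mem_singleton_iff, funext_iff, Finset.restrict,
      Subtype.forall, Set.mem_ofPred_eq]
    exact forall₂_congr fun x hx ↦ by rw [hvals ⟨x, hx⟩]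
  rw [Measure.map_apply (Finset.measurable_restrict A) (measurableSet_singleton v), hpre, hν,
    Measure.pi_singleton, ← Finset.prod_coe_sort A]
  simp [hvals]

theorem lintegral_prod_apply_eq_pow [IsProbabilityMeasure θ]
    (hν : ∀ (S : Finset ι) (vals : ι → β), ν {η | ∀ x ∈ S, η x = vals x} = ∏ x ∈ S, θ {vals x})
    (A : Finset ι) (F : β → ℝ≥0∞) :
    ∫⁻ η, ∏ x ∈ A, F (η x) ∂ν = (∫⁻ k, F k ∂θ) ^ A.card := by
  have hF : Measurable F := measurable_of_countable F
  calc ∫⁻ η, ∏ x ∈ A, F (η x) ∂ν = ∫⁻ v, ∏ x : A, F (v x) ∂(ν.map A.restrict) := by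
        rw [lintegral_map (measurable_of_countable _) (Finset.measurable_restrict A)]
        exact lintegral_congr fun η ↦ (A.prod_coe_sort fun x ↦ F (η x)).symm
    _ = ∏ x : A, ∫⁻ v, F (v x) ∂(Measure.pi fun _ ↦ θ) := by
        rw [map_finset_restrict_eq_pi hν]
        exact lintegral_prod_eq_prod_lintegral_of_indepFun _ _
          (iIndepFun_pi fun _ ↦ hF.aemeasurable) fun x ↦ hF.comp (measurable_pi_apply x)
    _ = (∫⁻ k, F k ∂θ) ^ A.card := by
        simp_rw [(measurePreserving_eval (fun _ : A ↦ θ) _).lintegral_comp hF]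
        simp

theorem lintegral_ofReal_exp_sum_eq_pow [IsProbabilityMeasure θ]
    (hν : ∀ (S : Finset ι) (vals : ι → β), ν {η | ∀ x ∈ S, η x = vals x} = ∏ x ∈ S, θ {vals x})
    (A : Finset ι) (φ : β → ℝ) :
    ∫⁻ η, ENNReal.ofReal (exp (∑ x ∈ A, φ (η x))) ∂ν
      = (∫⁻ k, ENNReal.ofReal (exp (φ k)) ∂θ) ^ A.card := by
  simp_rw [exp_sum, ENNReal.ofReal_prod_of_nonneg fun _ _ ↦ (exp_pos _).le]
  exact lintegral_prod_apply_eq_pow hν A fun k ↦ ENNReal.ofReal (exp (φ k))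

end Product

section Conversions

variable {α : Type*} [MeasurableSpace α] {μ : Measure α}

theorem one_le_of_lintegral_ofReal_exp_eq [IsProbabilityMeasure μ] {f : α → ℝ} (hf : 0 ≤ f)
    {M : ℝ} (h : ∫⁻ x, ENNReal.ofReal (exp (f x)) ∂μ = ENNReal.ofReal M) : 1 ≤ M := by
  rw [← ENNReal.one_le_ofReal, ← h]
  calc (1 : ℝ≥0∞) = ∫⁻ _, 1 ∂μ := by simp
    _ ≤ _ := lintegral_mono fun x ↦ ENNReal.one_le_ofReal.mpr (one_le_exp (hf x))

theorem integrable_and_integral_eq_of_lintegral_ofReal_eq {f : α → ℝ}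
    (hf : AEStronglyMeasurable f μ) (hf0 : 0 ≤ᵐ[μ] f) {c : ℝ} (hc : 0 ≤ c)
    (h : ∫⁻ x, ENNReal.ofReal (f x) ∂μ = ENNReal.ofReal c) :
    Integrable f μ ∧ ∫ x, f x ∂μ = c :=
  ⟨⟨hf, (hasFiniteIntegral_iff_ofReal hf0).mpr (h ▸ ENNReal.ofReal_lt_top)⟩,
    by rw [integral_eq_lintegral_of_nonneg_ae hf0 hf, h, ENNReal.toReal_ofReal hc]⟩

theorem lintegral_ofReal_le_div_of_lintegral_ofReal_mul_le {f : α → ℝ} (hf : Measurable f)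
    {c K : ℝ} (hc : 0 < c) (h : ∫⁻ x, ENNReal.ofReal (c * f x) ∂μ ≤ ENNReal.ofReal K) :
    ∫⁻ x, ENNReal.ofReal (f x) ∂μ ≤ ENNReal.ofReal (K / c) := by
  simp_rw [ENNReal.ofReal_mul hc.le] at h
  rw [lintegral_const_mul _ hf.ennreal_ofReal] at h
  rw [ENNReal.ofReal_div_of_pos hc, ENNReal.le_div_iff_mul_le (.inl (by simpa using hc))
    (.inl ENNReal.ofReal_ne_top), mul_comm]
  exact h

end Conversions

theorem entropy_particle_bound_general
    (n : ℕ) (γ : ℝ) (hγ : 0 < γ)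
    (θ : Measure ℕ) [IsProbabilityMeasure θ]
    (Mγ : ℝ)
    (hMγ : (∫⁻ k : ℕ, ENNReal.ofReal (Real.exp (γ * k)) ∂θ) = ENNReal.ofReal Mγ)
    (ν : Measure ((Fin n → ℤ) → ℕ)) [IsProbabilityMeasure ν]
    (hν : ∀ (S : Finset (Fin n → ℤ)) (vals : (Fin n → ℤ) → ℕ),
        ν {η | ∀ x ∈ S, η x = vals x} = ∏ x ∈ S, θ {vals x})
    (N : ℕ) (C C₁ : ℝ)
    (A : Finset (Fin n → ℤ)) (hA : (A.card : ℝ) ≤ C₁ * (N : ℝ) ^ n)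
    (μ : Measure ((Fin n → ℤ) → ℕ)) [IsProbabilityMeasure μ]
    (hac : μ ≪ ν)
    (hint : Integrable (fun η =>
        (μ.rnDeriv ν η).toReal * Real.log (μ.rnDeriv ν η).toReal) ν)
    (hent : (∫ η, (μ.rnDeriv ν η).toReal * Real.log (μ.rnDeriv ν η).toReal ∂ν)
        ≤ C * (N : ℝ) ^ n) :
    (∫⁻ η, (∑ x ∈ A, (η x : ℝ≥0∞)) ∂μ)
      ≤ ENNReal.ofReal (((C₁ * Real.log Mγ + C) / γ) * (N : ℝ) ^ n) := by
  set S : ((Fin n → ℤ) → ℕ) → ℝ := fun η ↦ ∑ x ∈ A, (η x : ℝ)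
  have hS : Measurable S := by fun_prop
  have hM : 1 ≤ Mγ := one_le_of_lintegral_ofReal_exp_eq (fun k ↦ by positivity) hMγ
  have hZ : ∫⁻ η, ENNReal.ofReal (exp (γ * S η)) ∂ν = ENNReal.ofReal (Mγ ^ A.card) := by
    simp_rw [S, Finset.mul_sum]
    rw [lintegral_ofReal_exp_sum_eq_pow hν A fun k ↦ γ * k, hMγ, ENNReal.ofReal_pow (by linarith)]
  obtain ⟨hexp, hexp_eq⟩ := integrable_and_integral_eq_of_lintegral_ofReal_eq
    (hS.const_mul γ).exp.aestronglyMeasurable (ae_of_all _ fun _ ↦ (exp_pos _).le)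
    (by positivity) hZ
  have hbound := lintegral_ofReal_le_relEntropy_add_log_integral_exp hac hint
    (hS.const_mul γ) (fun η ↦ by positivity) hexp
  rw [hexp_eq, log_pow] at hbound
  have hent' : relEntropy μ ν ≤ C * N ^ n := hent
  have hcount : (A.card : ℝ) * log Mγ ≤ C₁ * N ^ n * log Mγ :=
    mul_le_mul_of_nonneg_right hA (log_nonneg hM)
  calc ∫⁻ η, ∑ x ∈ A, (η x : ℝ≥0∞) ∂μ = ∫⁻ η, ENNReal.ofReal (S η) ∂μ := by
        simp [S, ENNReal.ofReal_sum_of_nonneg]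
    _ ≤ ENNReal.ofReal ((C * N ^ n + C₁ * N ^ n * log Mγ) / γ) :=
        lintegral_ofReal_le_div_of_lintegral_ofReal_mul_le hS hγ
          (hbound.trans (ENNReal.ofReal_le_ofReal (by linarith)))
    _ = _ := by congr 1; ring

/-- Entropy particle bound. Let `θ` be a probability measure on `ℕ` with
finite exponential moment `M_γ = Σ_k e^{γ k} θ({k})` for some `γ > 0`, and let
`ν = ⊗_{x ∈ ℤ^n} θ` be the product measure on configurations. If `A ⊆ ℤ^n` is finite
with `|A| ≤ C₁ N^n` and `μ` is a probability measure with relative entropy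
`H(μ | ν) = ∫ (dμ/dν) log(dμ/dν) dν ≤ C N^n`, then
`(1/N^n) ∫ Σ_{x ∈ A} η(x) dμ ≤ (C₁ log M_γ + C)/γ`. -/
theorem entropy_particle_bound
    (n : ℕ) (hn : 0 < n) (γ : ℝ) (hγ : 0 < γ)
    (θ : Measure ℕ) [IsProbabilityMeasure θ]
    (Mγ : ℝ)
    (hMγ : (∫⁻ k : ℕ, ENNReal.ofReal (Real.exp (γ * k)) ∂θ) = ENNReal.ofReal Mγ)
    (ν : Measure ((Fin n → ℤ) → ℕ)) [IsProbabilityMeasure ν]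
    (hν : ∀ (S : Finset (Fin n → ℤ)) (vals : (Fin n → ℤ) → ℕ),
        ν {η | ∀ x ∈ S, η x = vals x} = ∏ x ∈ S, θ {vals x})
    (N : ℕ) (hN : 1 ≤ N) (C C₁ : ℝ) (hC : 0 < C) (hC₁ : 0 < C₁)
    (A : Finset (Fin n → ℤ)) (hA : (A.card : ℝ) ≤ C₁ * (N : ℝ) ^ n)
    (μ : Measure ((Fin n → ℤ) → ℕ)) [IsProbabilityMeasure μ]
    (hac : μ ≪ ν)
    (hint : Integrable (fun η =>
        (μ.rnDeriv ν η).toReal * Real.log (μ.rnDeriv ν η).toReal) ν)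
    (hent : (∫ η, (μ.rnDeriv ν η).toReal * Real.log (μ.rnDeriv ν η).toReal ∂ν)
        ≤ C * (N : ℝ) ^ n) :
    (∫⁻ η, (∑ x ∈ A, (η x : ℝ≥0∞)) ∂μ)
      ≤ ENNReal.ofReal (((C₁ * Real.log Mγ + C) / γ) * (N : ℝ) ^ n) :=
  entropy_particle_bound_general n γ hγ θ Mγ hMγ ν hν N C C₁ A hA μ hac hint hent
end

section
/- Well-definedness of the nonlocal hydrodynamic operator for 0 < α < 1: let n ≥ 1, 0 < α < 1, let Φ : ℝ → ℝ be Lipschitz, let Ψ : ℝ → ℝ be bounded and Lipschitz, and let G : ℝ^n → ℝ be bounded and Lipschitz. Then for every u ∈ ℝ^n the function v ↦ ( Φ(G(u−v)) Ψ(G(u)) − Φ(G(u)) Ψ(G(u+v)) ) / ‖v‖^{n+α} is Lebesgue integrable on [0, ∞)^n, so the operator (𝓛G)(u) = ∫_{[0,∞)^n} ( Φ(G(u−v)) Ψ(G(u)) − Φ(G(u)) Ψ(G(u+v)) ) ‖v‖^{-(n+α)} dv is well defined. -/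
/-!
Near the origin the numerator is `O(‖v‖)`, because it vanishes at `v = 0` and is Lipschitz in
`v`, so the integrand is `O(‖v‖ ^ (1 - n - α))`, integrable on the unit ball since
`n + α - 1 < n`. Away from the origin the numerator is bounded, so the integrand is
`O(‖v‖ ^ (-(n + α)))`, integrable on the complement of the unit ball since `n + α > n`.
In fact the integrand is integrable on all of `ℝ^n`, not only on the orthant.
-/

open MeasureTheory Metric Set Module

section Kernel

variable {E : Type*} [NormedAddCommGroup E] [NormedSpace ℝ E] [FiniteDimensional ℝ E]
  [MeasurableSpace E] [BorelSpace E] {μ : Measure E} [μ.IsAddHaarMeasure]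

lemma integrableOn_compl_ball_of_norm_le_rpow {F : Type*} [NormedAddCommGroup F] {f : E → F}
    {C b : ℝ} (hb : (finrank ℝ E : ℝ) < b)
    (h_decay : ∀ x ∈ (ball (0 : E) 1)ᶜ, ‖f x‖ ≤ C * ‖x‖ ^ (-b))
    (h_meas : AEStronglyMeasurable f μ) :
    IntegrableOn f (ball 0 1)ᶜ μ := by
  have hb₀ : 0 ≤ b := (finrank ℝ E).cast_nonneg.trans hb.le
  refine ((integrable_one_add_norm hb).const_mul (|C| * 2 ^ b)).integrableOn.mono'
    h_meas.restrict (ae_restrict_of_forall_mem measurableSet_ball.compl fun x hx => ?_)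
  have hx₁ : 1 ≤ ‖x‖ := by simpa using hx
  have h_two : (2 * ‖x‖) ^ (-b) ≤ (1 + ‖x‖) ^ (-b) :=
    Real.rpow_le_rpow_of_nonpos (by positivity) (by linarith) (by linarith)
  calc ‖f x‖ ≤ C * ‖x‖ ^ (-b) := h_decay x hx
    _ ≤ |C| * ((2 * ‖x‖) ^ (-b) * 2 ^ b) := by
        rw [Real.mul_rpow zero_le_two (norm_nonneg x), mul_right_comm, ← Real.rpow_add two_pos,
          neg_add_cancel, Real.rpow_zero, one_mul]
        exact mul_le_mul_of_nonneg_right (le_abs_self C) (by positivity)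
    _ ≤ |C| * ((1 + ‖x‖) ^ (-b) * 2 ^ b) := by gcongr
    _ = |C| * 2 ^ b * (1 + ‖x‖) ^ (-b) := by ring

lemma integrable_div_norm_rpow_of_abs_le {g : E → ℝ} {C M p : ℝ} (hd : 1 ≤ finrank ℝ E)
    (hp₀ : (finrank ℝ E : ℝ) < p) (hp₁ : p < finrank ℝ E + 1) (hg : AEMeasurable g μ)
    (hg₀ : ∀ v, |g v| ≤ C * ‖v‖) (hg_bdd : ∀ v, |g v| ≤ M) :
    Integrable (fun v => g v / ‖v‖ ^ p) μ := by
  have h_meas : AEStronglyMeasurable (fun v => g v / ‖v‖ ^ p) μ :=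
    (hg.div (by fun_prop : Measurable fun v : E => ‖v‖ ^ p).aemeasurable).aestronglyMeasurable
  have h_norm (v : E) : ‖g v / ‖v‖ ^ p‖ = |g v| * ‖v‖ ^ (-p) := by
    rw [Real.norm_eq_abs, abs_div, abs_of_nonneg (Real.rpow_nonneg (norm_nonneg v) p),
      div_eq_mul_inv, Real.rpow_neg (norm_nonneg v)]
  have h_one_lt : (1 : ℝ) < p := lt_of_le_of_lt (by exact_mod_cast hd) hp₀
  rw [← integrableOn_univ, ← union_compl_self (ball (0 : E) 1)]
  refine IntegrableOn.union ?_ ?_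
  · refine integrableOn_ball_of_norm_le_rpow hd (C := C) (α := p - 1) (by linarith)
      (ae_of_all _ fun v => ?_) h_meas
    calc ‖g v / ‖v‖ ^ p‖ = |g v| * ‖v‖ ^ (-p) := h_norm v
      _ ≤ C * ‖v‖ * ‖v‖ ^ (-p) := by gcongr; exact hg₀ v
      _ = C * ‖v‖ ^ (-(p - 1)) := by
          rw [mul_assoc, ← Real.rpow_one_add' (norm_nonneg v) (by linarith)]
          ring_nf
  · refine integrableOn_compl_ball_of_norm_le_rpow (C := M) hp₀ (fun v _ => ?_) h_meas
    rw [h_norm v]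
    gcongr
    exact hg_bdd v

end Kernel

section Numerator

variable {E : Type*} [SeminormedAddCommGroup E] (Φ Ψ : ℝ → ℝ) (G : E → ℝ)

def hydroNumerator (u v : E) : ℝ := Φ (G (u - v)) * Ψ (G u) - Φ (G u) * Ψ (G (u + v))

lemma continuous_hydroNumerator (hΦ : Continuous Φ) (hΨ : Continuous Ψ) (hG : Continuous G)
    (u : E) : Continuous (hydroNumerator Φ Ψ G u) := by
  unfold hydroNumerator
  fun_prop

lemma abs_hydroNumerator_le_mul_norm {KΦ KΨ KG : NNReal} (hΦ : LipschitzWith KΦ Φ)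
    (hΨ : LipschitzWith KΨ Ψ) (hG : LipschitzWith KG G) (u v : E) :
    |hydroNumerator Φ Ψ G u v| ≤
      (KΦ * KG * |Ψ (G u)| + |Φ (G u)| * (KΨ * KG)) * ‖v‖ := by
  have hΦG : |Φ (G (u - v)) - Φ (G u)| ≤ KΦ * KG * ‖v‖ := by
    simpa [Real.dist_eq, dist_eq_norm] using (hΦ.comp hG).dist_le_mul (u - v) u
  have hΨG : |Ψ (G u) - Ψ (G (u + v))| ≤ KΨ * KG * ‖v‖ := by
    simpa [Real.dist_eq, dist_eq_norm] using (hΨ.comp hG).dist_le_mul u (u + v)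
  calc |hydroNumerator Φ Ψ G u v|
      = |(Φ (G (u - v)) - Φ (G u)) * Ψ (G u) + Φ (G u) * (Ψ (G u) - Ψ (G (u + v)))| := by
        unfold hydroNumerator; ring_nf
    _ ≤ |Φ (G (u - v)) - Φ (G u)| * |Ψ (G u)| + |Φ (G u)| * |Ψ (G u) - Ψ (G (u + v))| := by
        rw [← abs_mul, ← abs_mul]; exact abs_add_le _ _
    _ ≤ KΦ * KG * ‖v‖ * |Ψ (G u)| + |Φ (G u)| * (KΨ * KG * ‖v‖) := by gcongr
    _ = (KΦ * KG * |Ψ (G u)| + |Φ (G u)| * (KΨ * KG)) * ‖v‖ := by ring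

lemma exists_abs_hydroNumerator_le {KΦ : NNReal} (hΦ : LipschitzWith KΦ Φ)
    (hΨb : ∃ M : ℝ, ∀ x, |Ψ x| ≤ M) (hGb : ∃ M : ℝ, ∀ u, |G u| ≤ M) (u : E) :
    ∃ C : ℝ, ∀ v, |hydroNumerator Φ Ψ G u v| ≤ C := by
  obtain ⟨MΨ, hMΨ⟩ := hΨb
  obtain ⟨MG, hMG⟩ := hGb
  obtain ⟨MΦ, hMΦ⟩ : ∃ MΦ : ℝ, ∀ y ∈ range (Φ ∘ G), ‖y‖ ≤ MΦ := by
    rw [← isBounded_iff_forall_norm_le, range_comp]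
    exact hΦ.isBounded_image (isBounded_iff_forall_norm_le.2 ⟨MG, forall_mem_range.2 hMG⟩)
  have hΦG (w : E) : |Φ (G w)| ≤ MΦ := hMΦ _ (mem_range_self w)
  have hMΦ₀ : 0 ≤ MΦ := (abs_nonneg _).trans (hΦG u)
  refine ⟨MΦ * MΨ + MΦ * MΨ, fun v => ?_⟩
  calc |hydroNumerator Φ Ψ G u v|
      ≤ |Φ (G (u - v))| * |Ψ (G u)| + |Φ (G u)| * |Ψ (G (u + v))| := by
        rw [← abs_mul, ← abs_mul]; exact abs_sub _ _
    _ ≤ MΦ * MΨ + MΦ * MΨ := by gcongr <;> simp only [hΦG, hMΨ]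

end Numerator

/-- For `n ≥ 1`, `0 < α < 1`, `Φ` Lipschitz, `Ψ` bounded Lipschitz and
`G` bounded Lipschitz, the integrand of the nonlocal hydrodynamic operator
`(𝓛G)(u) = ∫_{[0,∞)^n} (Φ(G(u−v)) Ψ(G(u)) − Φ(G(u)) Ψ(G(u+v))) ‖v‖^{-(n+α)} dv`
is Lebesgue integrable on the closed positive orthant, for every `u ∈ ℝ^n`. -/
theorem hydrodynamic_operator_integrable
    (n : ℕ) (hn : 0 < n) (α : ℝ) (hα0 : 0 < α) (hα1 : α < 1)
    (Φ Ψ : ℝ → ℝ) (KΦ : NNReal) (hΦ : LipschitzWith KΦ Φ)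
    (KΨ : NNReal) (hΨ : LipschitzWith KΨ Ψ) (hΨb : ∃ M : ℝ, ∀ x, |Ψ x| ≤ M)
    (G : EuclideanSpace ℝ (Fin n) → ℝ) (KG : NNReal) (hG : LipschitzWith KG G)
    (hGb : ∃ M : ℝ, ∀ u, |G u| ≤ M) :
    ∀ u : EuclideanSpace ℝ (Fin n),
      IntegrableOn
        (fun v : EuclideanSpace ℝ (Fin n) =>
          (Φ (G (u - v)) * Ψ (G u) - Φ (G u) * Ψ (G (u + v))) / ‖v‖ ^ ((n : ℝ) + α))
        {v : EuclideanSpace ℝ (Fin n) | ∀ i, 0 ≤ v i} volume := by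
  intro u
  obtain ⟨M, hM⟩ := exists_abs_hydroNumerator_le Φ Ψ G hΦ hΨb hGb u
  have hd : finrank ℝ (EuclideanSpace ℝ (Fin n)) = n := finrank_euclideanSpace_fin
  refine Integrable.integrableOn (integrable_div_norm_rpow_of_abs_le (by rw [hd]; exact hn)
    (by rw [hd]; linarith) (by rw [hd]; linarith)
    (continuous_hydroNumerator Φ Ψ G hΦ.continuous hΨ.continuous hG.continuous u).aemeasurable
    (abs_hydroNumerator_le_mul_norm Φ Ψ G hΦ hΨ hG u) hM)
end
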